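/- arXiv:0810.3327 — 2 statements merged into one kernel-verified Lean document; each statement's English description precedes it below -/
import Mathlib

section
/- For all integers k, l, m with 1 ≤ l, m ≤ k: if l·m < k then c^{(k)}_{l,m} = 0, and if l·m ≥ k then c^{(k)}_{l,m} > 0. -/
/-- Unsigned Stirling numbers of the first kind: the number of permutations of
`n` elements with exactly `p` cycles. -/
def stirling1 : ℕ → ℕ → ℕ
  | 0, 0 => 1
  | 0, _ + 1 => 0
  | _ + 1, 0 => 0
  | n + 1, p + 1 => n * stirling1 n (p + 1) + stirling1 n p

/-- Stirling numbers of the second kind: the number of partitions of an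
`n`-element set into `p` nonempty blocks (`stirling2 p l = 0` when `p < l`). -/
def stirling2 : ℕ → ℕ → ℕ
  | 0, 0 => 1
  | 0, _ + 1 => 0
  | _ + 1, 0 => 0
  | n + 1, p + 1 => (p + 1) * stirling2 n (p + 1) + stirling2 n p

/-- The coefficients `c^(k)_{l,m} = ∑_{p=1}^k (-1)^(k-p) s(k,p) S(p,l) S(p,m)`. -/
def c (k l m : ℕ) : ℤ :=
  ∑ p ∈ Finset.Icc 1 k,
    (-1 : ℤ) ^ (k - p) * (stirling1 k p : ℤ) * (stirling2 p l : ℤ) * (stirling2 p m : ℤ)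

lemma stirling1_eq_zero_of_lt : ∀ n p : ℕ, n < p → stirling1 n p = 0 := by
  intro n
  induction n with
  | zero => intro p hp; match p, hp with | p+1, _ => rfl
  | succ n ih =>
    intro p hp
    match p, hp with
    | q+1, hp =>
      have h1 : stirling1 (n+1) (q+1) = n * stirling1 n (q+1) + stirling1 n q := rfl
      rw [h1, ih (q+1) (by omega), ih q (by omega)]; ring

lemma stirling2_eq_zero_of_lt : ∀ n p : ℕ, n < p → stirling2 n p = 0 := by
  intro n
  induction n with
  | zero => intro p hp; match p, hp with | p+1, _ => rfl
  | succ n ih =>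
    intro p hp
    match p, hp with
    | q+1, hp =>
      have h1 : stirling2 (n+1) (q+1) = (q+1) * stirling2 n (q+1) + stirling2 n q := rfl
      rw [h1, ih (q+1) (by omega), ih q (by omega)]; ring

lemma stirling1_zero_right (n : ℕ) (hn : 1 ≤ n) : stirling1 n 0 = 0 := by
  match n, hn with | n+1, _ => rfl

lemma c_zero_right (k l : ℕ) : c k l 0 = 0 := by
  apply Finset.sum_eq_zero
  intro p hp
  have h1 : 1 ≤ p := (Finset.mem_Icc.mp hp).1
  match p, h1 with
  | q+1, _ => have : stirling2 (q+1) 0 = 0 := rfl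
              rw [this]; push_cast; ring

lemma c_zero_left (k m : ℕ) : c k 0 m = 0 := by
  apply Finset.sum_eq_zero
  intro p hp
  have h1 : 1 ≤ p := (Finset.mem_Icc.mp hp).1
  match p, h1 with
  | q+1, _ => have : stirling2 (q+1) 0 = 0 := rfl
              rw [this]; push_cast; ring

lemma c_zero_of_lt_left {k l : ℕ} (m : ℕ) (h : k < l) : c k l m = 0 := by
  apply Finset.sum_eq_zero
  intro p hp
  have h1 : p ≤ k := (Finset.mem_Icc.mp hp).2
  rw [stirling2_eq_zero_of_lt p l (by omega)]; push_cast; ring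

lemma c_zero_of_lt_right {k m : ℕ} (l : ℕ) (h : k < m) : c k l m = 0 := by
  apply Finset.sum_eq_zero
  intro p hp
  have h1 : p ≤ k := (Finset.mem_Icc.mp hp).2
  rw [stirling2_eq_zero_of_lt p m (by omega)]; push_cast; ring

def d (k a b : ℕ) : ℤ :=
  ∑ i ∈ Finset.range k,
    (-1 : ℤ) ^ (i+1) * (stirling1 k (i+1) : ℤ) * (stirling2 (i+1) a : ℤ) * (stirling2 (i+1) b : ℤ)

lemma c_eq_d (k l m : ℕ) : c k l m = (-1 : ℤ) ^ k * d k l m := by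
  rw [c, d, Finset.mul_sum, ← Finset.Ico_add_one_right_eq_Icc, Finset.sum_Ico_eq_sum_range]
  simp only [Nat.add_sub_cancel, Nat.succ_sub_one]
  apply Finset.sum_congr rfl
  intro i hi
  have hik : i < k := Finset.mem_range.mp hi
  obtain ⟨j, rfl⟩ : ∃ j, k = 1 + i + j := ⟨k - (1+i), by omega⟩
  have h1 : 1 + i + j - (1 + i) = j := by omega
  have h2 : 1 + i = i + 1 := by omega
  rw [h1, h2]
  have h3 : ((-1:ℤ))^(i*2) = 1 := by rw [mul_comm, pow_mul, neg_one_sq, one_pow]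
  ring_nf
  rw [h3, mul_one]

lemma d_rec (k l m : ℕ) (hk : 1 ≤ k) :
    d (k+1) (l+1) (m+1) =
      ((k : ℤ) - (l+1)*(m+1)) * d k (l+1) (m+1) - (l+1) * d k (l+1) m
        - (m+1) * d k l (m+1) - d k l m := by
  have hG : ∀ a b : ℕ,
      (∑ i ∈ Finset.range (k+1),
        (-1:ℤ)^(i+1) * (stirling1 k i : ℤ) * (stirling2 i a : ℤ) * (stirling2 i b : ℤ))
        = - d k a b := by
    intro a b
    rw [Finset.sum_range_succ', d, ← Finset.sum_neg_distrib, stirling1_zero_right k hk]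
    push_cast
    rw [zero_mul, zero_mul, add_zero]
    apply Finset.sum_congr rfl
    intro i _
    ring
  have hE : (∑ i ∈ Finset.range (k+1),
      (-1:ℤ)^(i+1) * (stirling1 k (i+1) : ℤ) * (stirling2 (i+1) (l+1) : ℤ)
        * (stirling2 (i+1) (m+1) : ℤ)) = d k (l+1) (m+1) := by
    rw [Finset.sum_range_succ, stirling1_eq_zero_of_lt k (k+1) (by omega), d]
    push_cast
    rw [mul_zero, zero_mul, zero_mul, add_zero]
  calc d (k+1) (l+1) (m+1)
      = ∑ i ∈ Finset.range (k+1),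
          ((k:ℤ) * ((-1:ℤ)^(i+1) * (stirling1 k (i+1) : ℤ) * (stirling2 (i+1) (l+1) : ℤ)
              * (stirling2 (i+1) (m+1) : ℤ))
          + (((l:ℤ)+1)*((m:ℤ)+1) * ((-1:ℤ)^(i+1) * (stirling1 k i : ℤ)
              * (stirling2 i (l+1) : ℤ) * (stirling2 i (m+1) : ℤ))
          + (((l:ℤ)+1) * ((-1:ℤ)^(i+1) * (stirling1 k i : ℤ)
              * (stirling2 i (l+1) : ℤ) * (stirling2 i m : ℤ))
          + (((m:ℤ)+1) * ((-1:ℤ)^(i+1) * (stirling1 k i : ℤ)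
              * (stirling2 i l : ℤ) * (stirling2 i (m+1) : ℤ))
          + ((-1:ℤ)^(i+1) * (stirling1 k i : ℤ)
              * (stirling2 i l : ℤ) * (stirling2 i m : ℤ)))))) := by
        rw [d]
        apply Finset.sum_congr rfl
        intro i _
        have e1 : stirling1 (k+1) (i+1) = k * stirling1 k (i+1) + stirling1 k i := rfl
        have e2 : stirling2 (i+1) (l+1) = (l+1) * stirling2 i (l+1) + stirling2 i l := rfl
        have e3 : stirling2 (i+1) (m+1) = (m+1) * stirling2 i (m+1) + stirling2 i m := rfl
        rw [e1, e2, e3]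
        push_cast
        ring
    _ = ((k : ℤ) - (l+1)*(m+1)) * d k (l+1) (m+1) - (l+1) * d k (l+1) m
          - (m+1) * d k l (m+1) - d k l m := by
        rw [Finset.sum_add_distrib, Finset.sum_add_distrib, Finset.sum_add_distrib,
          Finset.sum_add_distrib, ← Finset.mul_sum, ← Finset.mul_sum, ← Finset.mul_sum,
          ← Finset.mul_sum, hE, hG, hG, hG, hG]
        ring

lemma c_rec (k l m : ℕ) (hk : 1 ≤ k) :
    c (k+1) (l+1) (m+1) =
      (((l:ℤ)+1)*((m:ℤ)+1) - (k:ℤ)) * c k (l+1) (m+1) + ((l:ℤ)+1) * c k (l+1) m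
        + ((m:ℤ)+1) * c k l (m+1) + c k l m := by
  rw [c_eq_d, c_eq_d, c_eq_d, c_eq_d, c_eq_d, d_rec k l m hk, pow_succ]
  ring

lemma c_one : c 1 1 1 = 1 := by
  have : Finset.Icc 1 1 = {1} := rfl
  rw [c, this, Finset.sum_singleton]
  norm_num [stirling1, stirling2]

lemma key : ∀ k : ℕ, 1 ≤ k → ∀ l m : ℕ, 1 ≤ l → l ≤ k → 1 ≤ m → m ≤ k →
    (l * m < k → c k l m = 0) ∧ (k ≤ l * m → 0 < c k l m) := by
  intro k
  induction k with
  | zero => omega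
  | succ k ih =>
    intro _ l m hl1 hlk hm1 hmk
    rcases Nat.eq_zero_or_pos k with rfl | hk
    · have hl : l = 1 := by omega
      have hm : m = 1 := by omega
      subst hl; subst hm
      refine ⟨by omega, fun _ => ?_⟩
      rw [c_one]; norm_num
    · have IH := ih hk
      have hnn : ∀ a b : ℕ, 0 ≤ c k a b := by
        intro a b
        match a, b with
        | 0, b => rw [c_zero_left]
        | a+1, 0 => rw [c_zero_right]
        | a+1, b+1 =>
          rcases Nat.lt_or_ge k (a+1) with h | ha
          · rw [c_zero_of_lt_left _ h]
          rcases Nat.lt_or_ge k (b+1) with h | hb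
          · rw [c_zero_of_lt_right _ h]
          rcases Nat.lt_or_ge ((a+1)*(b+1)) k with h | h
          · rw [(IH (a+1) (b+1) (by omega) ha (by omega) hb).1 h]
          · exact le_of_lt ((IH (a+1) (b+1) (by omega) ha (by omega) hb).2 h)
      obtain ⟨l, rfl⟩ : ∃ l', l = l'+1 := ⟨l-1, by omega⟩
      obtain ⟨m, rfl⟩ : ∃ m', m = m'+1 := ⟨m-1, by omega⟩
      rw [c_rec k l m hk]
      constructor
      · intro hlt
        have hLM : (l+1)*(m+1) ≤ k := by omega
        have h2 : c k (l+1) m = 0 := by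
          match m with
          | 0 => exact c_zero_right k (l+1)
          | m+1 =>
            exact (IH (l+1) (m+1) (by omega) (by nlinarith) (by omega) (by nlinarith)).1
              (by nlinarith)
        have h3 : c k l (m+1) = 0 := by
          match l with
          | 0 => exact c_zero_left k (m+1)
          | l+1 =>
            exact (IH (l+1) (m+1) (by omega) (by nlinarith) (by omega) (by nlinarith)).1
              (by nlinarith)
        have h4 : c k l m = 0 := by
          match l with
          | 0 => exact c_zero_left k m
          | l+1 =>
            match m with
            | 0 => exact c_zero_right k (l+1)
            | m+1 =>
              exact (IH (l+1) (m+1) (by omega) (by nlinarith) (by omega) (by nlinarith)).1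
                (by nlinarith)
        rcases Nat.lt_or_ge ((l+1)*(m+1)) k with h | h
        · have h1 : c k (l+1) (m+1) = 0 :=
            (IH (l+1) (m+1) (by omega) (by nlinarith) (by omega) (by nlinarith)).1 h
          rw [h1, h2, h3, h4]; ring
        · have h1 : ((l:ℤ)+1)*((m:ℤ)+1) - (k:ℤ) = 0 := by
            have : (l+1)*(m+1) = k := by omega
            push_cast [← this]; ring
          rw [h1, h2, h3, h4]; ring
      · intro hge
        have hge' : k < (l+1)*(m+1) := by omega
        rcases Nat.lt_or_ge l k with hlk' | hlk' <;> rcases Nat.lt_or_ge m k with hmk' | hmk'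
        · -- l+1 ≤ k, m+1 ≤ k
          have h1 : 0 < c k (l+1) (m+1) :=
            (IH (l+1) (m+1) (by omega) (by omega) (by omega) (by omega)).2 (by omega)
          have hc : (0:ℤ) < ((l:ℤ)+1)*((m:ℤ)+1) - (k:ℤ) := by
            have : (k:ℤ) < (((l+1)*(m+1) : ℕ) : ℤ) := by exact_mod_cast hge'
            push_cast at this; linarith
          have t1 : 0 < (((l:ℤ)+1)*((m:ℤ)+1) - (k:ℤ)) * c k (l+1) (m+1) := mul_pos hc h1
          have t2 : 0 ≤ ((l:ℤ)+1) * c k (l+1) m := mul_nonneg (by positivity) (hnn (l+1) m)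
          have t3 : 0 ≤ ((m:ℤ)+1) * c k l (m+1) := mul_nonneg (by positivity) (hnn l (m+1))
          have t4 := hnn l m
          linarith
        · -- l+1 ≤ k, m = k
          have hm' : m = k := by omega
          have h1 : c k (l+1) (m+1) = 0 := c_zero_of_lt_right _ (by omega)
          have h3 : c k l (m+1) = 0 := c_zero_of_lt_right _ (by omega)
          have h2 : 0 < c k (l+1) m :=
            (IH (l+1) m (by omega) (by omega) (by omega) (by omega)).2 (by nlinarith)
          have t2 : 0 < ((l:ℤ)+1) * c k (l+1) m := mul_pos (by positivity) h2
          have t4 := hnn l m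
          rw [h1, h3]
          simp only [mul_zero, zero_add, add_zero]
          linarith
        · -- l = k, m+1 ≤ k
          have hl' : l = k := by omega
          have h1 : c k (l+1) (m+1) = 0 := c_zero_of_lt_left _ (by omega)
          have h2 : c k (l+1) m = 0 := c_zero_of_lt_left _ (by omega)
          have h3 : 0 < c k l (m+1) :=
            (IH l (m+1) (by omega) (by omega) (by omega) (by omega)).2 (by nlinarith)
          have t3 : 0 < ((m:ℤ)+1) * c k l (m+1) := mul_pos (by positivity) h3
          have t4 := hnn l m
          rw [h1, h2]
          simp only [mul_zero, zero_add, add_zero]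
          linarith
        · -- l = k, m = k
          have hl' : l = k := by omega
          have hm' : m = k := by omega
          have h1 : c k (l+1) (m+1) = 0 := c_zero_of_lt_left _ (by omega)
          have h2 : c k (l+1) m = 0 := c_zero_of_lt_left _ (by omega)
          have h3 : c k l (m+1) = 0 := c_zero_of_lt_right _ (by omega)
          have h4 : 0 < c k l m :=
            (IH l m (by omega) (by omega) (by omega) (by omega)).2 (by nlinarith)
          rw [h1, h2, h3]
          simp only [mul_zero, zero_add, add_zero]
          linarith

/-- Vanishing and positivity of `c^(k)_{l,m}`: zero iff the table is too small. -/
theorem c_vanishing_and_positivity (k l m : ℕ) (hl1 : 1 ≤ l) (hlk : l ≤ k)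
    (hm1 : 1 ≤ m) (hmk : m ≤ k) :
    (l * m < k → c k l m = 0) ∧ (k ≤ l * m → 0 < c k l m) := by
  exact key k (by omega) l m hl1 hlk hm1 hmk
end

section
/- For all integers k ≥ 1, n ≥ 1, and every multi-index L = (l₁,…,lₙ) with 1 ≤ l_i ≤ k for each i: if ∏_{i=1}^{n} l_i < k then c^{(k)}_L = 0, and if ∏_{i=1}^{n} l_i ≥ k then c^{(k)}_L > 0. -/
open Nat Finset

/-- The multivariable coefficients
`c^(k)_L = ∑_{p=1}^k (-1)^(k-p) s(k,p) ∏_i S(p, l_i)`. -/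
def cMulti (k : ℕ) {n : ℕ} (L : Fin n → ℕ) : ℤ :=
  ∑ p ∈ Finset.Icc 1 k,
    (-1 : ℤ) ^ (k - p) * (stirling1 k p : ℤ) * ∏ i, (stirling2 p (L i) : ℤ)

lemma stirling1_zero_right_s17 (k : ℕ) (hk : 1 ≤ k) : stirling1 k 0 = 0 := by
  match k, hk with
  | n + 1, _ => rfl

lemma stirling1_eq_zero {k p : ℕ} (h : k < p) : stirling1 k p = 0 := by
  induction k generalizing p with
  | zero => match p, h with | p + 1, _ => rfl
  | succ k ih =>
    match p, h with
    | p + 1, h =>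
      show k * stirling1 k (p + 1) + stirling1 k p = 0
      rw [ih (by omega), ih (by omega)]
      simp

lemma neg_one_pow_sub {p k : ℕ} (h : p ≤ k) :
    (-1 : ℤ) ^ (k - p) = (-1) ^ k * (-1) ^ p := by
  conv_rhs => rw [show k = (k - p) + p by omega]
  rw [pow_add, mul_assoc, ← pow_add, ← two_mul, pow_mul]
  norm_num

lemma stirling1_sum (k : ℕ) (x : ℤ) :
    ∑ p ∈ range (k + 1), (-1) ^ p * (stirling1 k p : ℤ) * x ^ p
      = ∏ j ∈ range k, ((j : ℤ) - x) := by
  induction k with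
  | zero => simp [stirling1]
  | succ k ih =>
    rw [prod_range_succ, ← ih, Finset.sum_range_succ']
    have h0 : (-1 : ℤ) ^ 0 * (stirling1 (k + 1) 0 : ℤ) * x ^ 0 = 0 := by
      rw [stirling1_zero_right_s17 (k + 1) (by omega)]; simp
    rw [h0, add_zero]
    have hterm : ∀ p, (-1 : ℤ) ^ (p + 1) * (stirling1 (k + 1) (p + 1) : ℤ) * x ^ (p + 1)
        = (k : ℤ) * (-((-1) ^ p * (stirling1 k (p + 1) : ℤ) * x ^ p * x))
          + (-x) * ((-1) ^ p * (stirling1 k p : ℤ) * x ^ p) := by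
      intro p
      show (-1 : ℤ) ^ (p + 1) * ((k * stirling1 k (p + 1) + stirling1 k p : ℕ) : ℤ) * x ^ (p + 1) = _
      push_cast
      ring
    rw [Finset.sum_congr rfl fun p _ => hterm p, Finset.sum_add_distrib, ← Finset.mul_sum,
      ← Finset.mul_sum]
    have hshift : (k : ℤ) * ∑ p ∈ range (k + 1),
          (-((-1 : ℤ) ^ p * (stirling1 k (p + 1) : ℤ) * x ^ p * x))
        = (k : ℤ) * ∑ p ∈ range (k + 1), (-1) ^ p * (stirling1 k p : ℤ) * x ^ p := by
      rcases Nat.eq_zero_or_pos k with rfl | hk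
      · simp
      · congr 1
        have h1 : ∀ p, -((-1 : ℤ) ^ p * (stirling1 k (p + 1) : ℤ) * x ^ p * x)
            = (-1) ^ (p + 1) * (stirling1 k (p + 1) : ℤ) * x ^ (p + 1) := by
          intro p; ring
        rw [Finset.sum_congr rfl fun p _ => h1 p]
        have h2 : ∑ p ∈ range (k + 2), (-1 : ℤ) ^ p * (stirling1 k p : ℤ) * x ^ p
            = (∑ p ∈ range (k + 1), (-1 : ℤ) ^ (p + 1) * (stirling1 k (p + 1) : ℤ) * x ^ (p + 1))
              + (-1 : ℤ) ^ 0 * (stirling1 k 0 : ℤ) * x ^ 0 := Finset.sum_range_succ' _ _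
        rw [stirling1_zero_right_s17 k hk] at h2
        simp only [Nat.cast_zero, mul_zero, zero_mul, add_zero, pow_zero, mul_one, one_mul] at h2
        rw [← h2, Finset.sum_range_succ, stirling1_eq_zero (by omega : k < k + 1)]
        simp
    rw [hshift]
    ring

lemma prod_sub_eq_descFactorial (m k : ℕ) :
    ∏ j ∈ range k, ((m : ℤ) - j) = (m.descFactorial k : ℤ) := by
  induction k with
  | zero => simp
  | succ k ih =>
    rw [prod_range_succ, ih, Nat.descFactorial_succ]
    rcases le_or_gt k m with h | h
    · push_cast [h]
      ring
    · rw [Nat.descFactorial_eq_zero_iff_lt.2 h]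
      simp

lemma stirling1_desc (k : ℕ) (hk : 1 ≤ k) (m : ℕ) :
    ∑ p ∈ Finset.Icc 1 k, (-1 : ℤ) ^ (k - p) * (stirling1 k p : ℤ) * (m : ℤ) ^ p
      = (m.descFactorial k : ℤ) := by
  have hins : Finset.range (k + 1) = insert 0 (Finset.Icc 1 k) := by
    ext p
    simp [Finset.mem_range, Finset.mem_Icc, Finset.mem_insert]
    omega
  have h1 : ∑ p ∈ Finset.Icc 1 k, (-1 : ℤ) ^ (k - p) * (stirling1 k p : ℤ) * (m : ℤ) ^ p
      = (-1) ^ k * ∑ p ∈ range (k + 1), (-1) ^ p * (stirling1 k p : ℤ) * (m : ℤ) ^ p := by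
    rw [hins, Finset.sum_insert (by simp), stirling1_zero_right_s17 k hk]
    simp only [Nat.cast_zero, mul_zero, zero_mul, pow_zero, mul_one, zero_add]
    rw [Finset.mul_sum]
    refine Finset.sum_congr rfl fun p hp => ?_
    rw [Finset.mem_Icc] at hp
    rw [neg_one_pow_sub hp.2]
    ring
  rw [h1, stirling1_sum, ← prod_sub_eq_descFactorial]
  have h2 : ∀ j ∈ range k, ((m : ℤ) - j) = (-1) * ((j : ℤ) - m) := fun j _ => by ring
  rw [Finset.prod_congr rfl h2, Finset.prod_mul_distrib, Finset.prod_const, Finset.card_range]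

lemma alt_sum_choose (l : ℕ) :
    ∑ j ∈ range (l + 1), (-1 : ℤ) ^ (l - j) * (l.choose j : ℤ)
      = if l = 0 then 1 else 0 := by
  have h : ∀ j ∈ range (l + 1), (-1 : ℤ) ^ (l - j) * (l.choose j : ℤ)
      = (-1) ^ l * ((-1) ^ j * (l.choose j : ℤ)) := by
    intro j hj
    rw [Finset.mem_range] at hj
    rw [neg_one_pow_sub (by omega)]
    ring
  rw [Finset.sum_congr rfl h, ← Finset.mul_sum, Int.alternating_sum_range_choose]
  split_ifs with h0
  · subst h0; simp
  · simp

lemma choose_id (l j : ℕ) : (j : ℤ) * ((l + 1).choose j : ℤ)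
    = ((l : ℤ) + 1) * ((l + 1).choose j : ℤ) - ((l : ℤ) + 1) * (l.choose j : ℤ) := by
  cases j with
  | zero => simp
  | succ j =>
    have h' : ((l : ℤ) + 1) * (l.choose j : ℤ) = ((l + 1).choose (j + 1) : ℤ) * ((j : ℤ) + 1) := by
      exact_mod_cast Nat.add_one_mul_choose_eq l j
    have h2' : ((l + 1).choose (j + 1) : ℤ) = (l.choose j : ℤ) + (l.choose (j + 1) : ℤ) := by
      exact_mod_cast Nat.choose_succ_succ l j
    push_cast
    linear_combination -h' - ((l : ℤ) + 1) * h2'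

lemma alt_sum_pow (p l : ℕ) :
    ∑ j ∈ range (l + 1), (-1 : ℤ) ^ (l - j) * (l.choose j : ℤ) * (j : ℤ) ^ p
      = ((l.factorial * stirling2 p l : ℕ) : ℤ) := by
  induction p generalizing l with
  | zero =>
    simp only [pow_zero, mul_one]
    rw [alt_sum_choose]
    cases l with
    | zero => norm_num [stirling2]
    | succ l => norm_num [stirling2]
  | succ p ih =>
    cases l with
    | zero =>
      rw [Finset.sum_range_one]
      norm_num [stirling2]
    | succ l =>
      have hterm : ∀ j ∈ range (l + 2),
          (-1 : ℤ) ^ (l + 1 - j) * ((l + 1).choose j : ℤ) * (j : ℤ) ^ (p + 1)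
          = ((l : ℤ) + 1) * ((-1) ^ (l + 1 - j) * ((l + 1).choose j : ℤ) * (j : ℤ) ^ p)
            - ((l : ℤ) + 1) * ((-1) ^ (l + 1 - j) * (l.choose j : ℤ) * (j : ℤ) ^ p) := by
        intro j _
        have h := choose_id l j
        calc (-1 : ℤ) ^ (l + 1 - j) * ((l + 1).choose j : ℤ) * (j : ℤ) ^ (p + 1)
            = (-1 : ℤ) ^ (l + 1 - j) * ((j : ℤ) * ((l + 1).choose j : ℤ)) * (j : ℤ) ^ p := by
              ring
          _ = _ := by rw [h]; ring
      rw [Finset.sum_congr rfl hterm, Finset.sum_sub_distrib, ← Finset.mul_sum, ← Finset.mul_sum,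
        ih (l + 1)]
      have hsec : ∑ j ∈ range (l + 2), (-1 : ℤ) ^ (l + 1 - j) * (l.choose j : ℤ) * (j : ℤ) ^ p
          = - ∑ j ∈ range (l + 1), (-1 : ℤ) ^ (l - j) * (l.choose j : ℤ) * (j : ℤ) ^ p := by
        rw [Finset.sum_range_succ, Nat.choose_succ_self]
        simp only [Nat.cast_zero, mul_zero, zero_mul, add_zero]
        have h3 : ∀ j ∈ range (l + 1),
            (-1 : ℤ) ^ (l + 1 - j) * (l.choose j : ℤ) * (j : ℤ) ^ p
            = -((-1 : ℤ) ^ (l - j) * (l.choose j : ℤ) * (j : ℤ) ^ p) := by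
          intro j hj
          rw [Finset.mem_range] at hj
          rw [show l + 1 - j = (l - j) + 1 by omega, pow_succ]
          ring
        rw [Finset.sum_congr rfl h3, Finset.sum_neg_distrib]
      rw [hsec, ih l]
      rw [show stirling2 (p + 1) (l + 1) = (l + 1) * stirling2 p (l + 1) + stirling2 p l from rfl,
        Nat.factorial_succ]
      push_cast
      ring

lemma alt_sum_pow_powerset (p l : ℕ) :
    ∑ S ∈ (Finset.univ : Finset (Fin l)).powerset, (-1 : ℤ) ^ (l - S.card) * (S.card : ℤ) ^ p
      = ((l.factorial * stirling2 p l : ℕ) : ℤ) := by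
  rw [Finset.sum_powerset_apply_card (fun m => (-1 : ℤ) ^ (l - m) * (m : ℤ) ^ p)]
  rw [← alt_sum_pow p l]
  simp only [Finset.card_univ, Fintype.card_fin, nsmul_eq_mul]
  refine Finset.sum_congr rfl fun m _ => ?_
  ring

lemma pivot (k : ℕ) (hk : 1 ≤ k) {n : ℕ} (L : Fin n → ℕ) :
    ((∏ i, (L i).factorial : ℕ) : ℤ) * cMulti k L
      = ∑ S ∈ Fintype.piFinset (fun i => (Finset.univ : Finset (Fin (L i))).powerset),
          (∏ i, (-1 : ℤ) ^ (L i - (S i).card)) * (((∏ i, (S i).card).descFactorial k : ℕ) : ℤ) := by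
  rw [cMulti, Finset.mul_sum]
  have step1 : ∀ p ∈ Finset.Icc 1 k,
      ((∏ i, (L i).factorial : ℕ) : ℤ)
        * ((-1) ^ (k - p) * (stirling1 k p : ℤ) * ∏ i, (stirling2 p (L i) : ℤ))
      = ∑ S ∈ Fintype.piFinset (fun i => (Finset.univ : Finset (Fin (L i))).powerset),
          (∏ i, (-1 : ℤ) ^ (L i - (S i).card))
            * ((-1) ^ (k - p) * (stirling1 k p : ℤ) * (∏ i, ((S i).card : ℤ)) ^ p) := by
    intro p _
    calc ((∏ i, (L i).factorial : ℕ) : ℤ)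
          * ((-1) ^ (k - p) * (stirling1 k p : ℤ) * ∏ i, (stirling2 p (L i) : ℤ))
        = (-1) ^ (k - p) * (stirling1 k p : ℤ)
            * ∏ i, (((L i).factorial * stirling2 p (L i) : ℕ) : ℤ) := by
          push_cast
          rw [Finset.prod_mul_distrib]
          ring
      _ = (-1) ^ (k - p) * (stirling1 k p : ℤ)
            * ∏ i, ∑ S ∈ (Finset.univ : Finset (Fin (L i))).powerset,
                (-1 : ℤ) ^ (L i - S.card) * (S.card : ℤ) ^ p := by
          rw [Finset.prod_congr rfl fun i _ => (alt_sum_pow_powerset p (L i)).symm]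
      _ = (-1) ^ (k - p) * (stirling1 k p : ℤ)
            * ∑ S ∈ Fintype.piFinset (fun i => (Finset.univ : Finset (Fin (L i))).powerset),
                ∏ i, ((-1 : ℤ) ^ (L i - (S i).card) * ((S i).card : ℤ) ^ p) := by
          rw [Finset.prod_univ_sum]
      _ = _ := by
          rw [Finset.mul_sum]
          refine Finset.sum_congr rfl fun S _ => ?_
          rw [Finset.prod_mul_distrib, Finset.prod_pow]
          ring
  rw [Finset.sum_congr rfl step1, Finset.sum_comm]
  refine Finset.sum_congr rfl fun S _ => ?_
  rw [← Finset.mul_sum]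
  congr 1
  have hc : (∏ i, ((S i).card : ℤ)) = (((∏ i, (S i).card : ℕ)) : ℤ) := by push_cast; rfl
  rw [Finset.sum_congr rfl fun p _ => by rw [hc]]
  exact stirling1_desc k hk _

lemma surj_indicator {k l : ℕ} (u : Fin k → Fin l) :
    ∑ S ∈ (Finset.univ : Finset (Fin l)).powerset,
      (-1 : ℤ) ^ (l - S.card) * (if ∀ x, u x ∈ S then 1 else 0)
    = if Function.Surjective u then 1 else 0 := by
  classical
  set R : Finset (Fin l) := Finset.univ.image u with hR
  have hcond : ∀ S : Finset (Fin l), (∀ x, u x ∈ S) ↔ R ⊆ S := by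
    intro S
    constructor
    · intro h y hy
      obtain ⟨x, _, rfl⟩ := Finset.mem_image.mp hy
      exact h x
    · intro h x
      exact h (Finset.mem_image_of_mem u (Finset.mem_univ x))
  have h1 : ∑ S ∈ (Finset.univ : Finset (Fin l)).powerset,
        (-1 : ℤ) ^ (l - S.card) * (if ∀ x, u x ∈ S then 1 else 0)
      = ∑ S ∈ (Finset.univ : Finset (Fin l)).powerset.filter (fun S => R ⊆ S),
          (-1 : ℤ) ^ (l - S.card) := by
    rw [Finset.sum_filter]
    refine Finset.sum_congr rfl fun S _ => ?_
    rw [if_congr (hcond S) rfl rfl]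
    split_ifs <;> simp
  rw [h1]
  have h2 : ∑ S ∈ (Finset.univ : Finset (Fin l)).powerset.filter (fun S => R ⊆ S),
        (-1 : ℤ) ^ (l - S.card)
      = ∑ T ∈ Rᶜ.powerset, (-1 : ℤ) ^ (l - R.card) * (-1) ^ T.card := by
    refine Finset.sum_nbij' (fun S => S \ R) (fun T => R ∪ T) ?_ ?_ ?_ ?_ ?_
    · intro S hS
      rw [Finset.mem_filter] at hS
      rw [Finset.mem_powerset]
      intro x hx
      rw [Finset.mem_sdiff] at hx
      simpa using hx.2
    · intro T hT
      rw [Finset.mem_powerset] at hT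
      rw [Finset.mem_filter, Finset.mem_powerset]
      exact ⟨Finset.subset_univ _, Finset.subset_union_left⟩
    · intro S hS
      rw [Finset.mem_filter] at hS
      exact Finset.union_sdiff_of_subset hS.2
    · intro T hT
      rw [Finset.mem_powerset] at hT
      show (R ∪ T) \ R = T
      rw [Finset.union_sdiff_cancel_left]
      rw [Finset.disjoint_left]
      intro a haR haT
      have := hT haT
      simp at this
      exact this haR
    · intro S hS
      rw [Finset.mem_filter, Finset.mem_powerset] at hS
      have hcard : S.card = R.card + (S \ R).card := by
        rw [← Finset.card_union_of_disjoint (Finset.disjoint_sdiff),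
          Finset.union_sdiff_of_subset hS.2]
      have hRl : R.card ≤ l := by
        have := Finset.card_le_card (Finset.subset_univ R)
        simpa using this
      have hSl : S.card ≤ l := by
        have := Finset.card_le_card hS.1
        simpa using this
      rw [show l - S.card = (l - R.card) - (S \ R).card by omega]
      rw [neg_one_pow_sub (by omega)]
  rw [h2, ← Finset.mul_sum, Finset.sum_powerset_neg_one_pow_card]
  have hsurj_iff : Function.Surjective u ↔ R = Finset.univ := by
    constructor
    · intro h; exact Finset.image_univ_of_surjective h
    · intro h y
      have : y ∈ R := h ▸ Finset.mem_univ y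
      obtain ⟨x, _, hx⟩ := Finset.mem_image.mp this
      exact ⟨x, hx⟩
  rw [← Finset.compl_eq_empty_iff] at hsurj_iff
  split_ifs with h1' h2' h2'
  · have hc : R.card = l := by
      have h3 := Finset.card_compl R
      rw [h1'] at h3
      simp at h3
      have h4 : R.card ≤ l := by
        have := Finset.card_le_card (Finset.subset_univ R)
        simpa using this
      omega
    rw [hc]
    simp
  · exact absurd (hsurj_iff.mpr h1') h2'
  · exact absurd (hsurj_iff.mp h2') h1'
  · simp

lemma card_inj_into (k : ℕ) {n : ℕ} (L : Fin n → ℕ) (S : ∀ i, Finset (Fin (L i))) :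
    ((Finset.univ.filter (fun f : Fin k → ∀ i, Fin (L i) =>
        Function.Injective f ∧ ∀ x i, f x i ∈ S i)).card)
      = (∏ i, (S i).card).descFactorial k := by
  classical
  have e : {f : Fin k → ∀ i, Fin (L i) // Function.Injective f ∧ ∀ x i, f x i ∈ S i}
      ≃ (Fin k ↪ ∀ i, {a : Fin (L i) // a ∈ S i}) :=
    { toFun := fun fh => ⟨fun x i => ⟨fh.1 x i, fh.2.2 x i⟩, by
        intro a b hab
        apply fh.2.1
        funext i
        exact congrArg Subtype.val (congrFun hab i)⟩
      invFun := fun g => ⟨fun x i => (g x i).1, by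
        constructor
        · intro a b hab
          apply g.injective
          funext i
          exact Subtype.ext (congrFun hab i)
        · exact fun x i => (g x i).2⟩
      left_inv := fun fh => rfl
      right_inv := fun g => by
        ext x i
        rfl }
  calc (Finset.univ.filter (fun f : Fin k → ∀ i, Fin (L i) =>
        Function.Injective f ∧ ∀ x i, f x i ∈ S i)).card
      = Fintype.card {f : Fin k → ∀ i, Fin (L i) //
          Function.Injective f ∧ ∀ x i, f x i ∈ S i} := (Fintype.card_subtype _).symm
    _ = Fintype.card (Fin k ↪ ∀ i, {a : Fin (L i) // a ∈ S i}) := Fintype.card_congr e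
    _ = (∏ i, (S i).card).descFactorial k := by
        rw [Fintype.card_embedding_eq]
        congr 1
        · rw [Fintype.card_pi]
          exact Finset.prod_congr rfl fun i _ => Fintype.card_coe (S i)
        · exact Fintype.card_fin k

lemma pivot_eq_card (k : ℕ) {n : ℕ} (L : Fin n → ℕ) :
    ∑ S ∈ Fintype.piFinset (fun i => (Finset.univ : Finset (Fin (L i))).powerset),
        (∏ i, (-1 : ℤ) ^ (L i - (S i).card)) * (((∏ i, (S i).card).descFactorial k : ℕ) : ℤ)
    = ((Finset.univ.filter (fun f : Fin k → ∀ i, Fin (L i) =>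
        Function.Injective f ∧ ∀ i, Function.Surjective (fun x => f x i))).card : ℤ) := by
  classical
  have hD : ∀ S : ∀ i, Finset (Fin (L i)),
      (((∏ i, (S i).card).descFactorial k : ℕ) : ℤ)
      = ∑ f ∈ (Finset.univ : Finset (Fin k → ∀ i, Fin (L i))),
          (if Function.Injective f ∧ ∀ x i, f x i ∈ S i then (1 : ℤ) else 0) := by
    intro S
    rw [← card_inj_into k L S, Finset.natCast_card_filter]
  rw [Finset.sum_congr rfl fun S _ => by rw [hD S, Finset.mul_sum]]
  rw [Finset.sum_comm]
  rw [Finset.natCast_card_filter]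
  refine Finset.sum_congr rfl fun f _ => ?_
  by_cases hInj : Function.Injective f
  · have hsplit : ∀ S : ∀ i, Finset (Fin (L i)),
        (∏ i, (-1 : ℤ) ^ (L i - (S i).card))
          * (if Function.Injective f ∧ ∀ x i, f x i ∈ S i then (1 : ℤ) else 0)
        = ∏ i, ((-1 : ℤ) ^ (L i - (S i).card) * (if ∀ x, f x i ∈ S i then 1 else 0)) := by
      intro S
      rw [Finset.prod_mul_distrib]
      congr 1
      rw [Fintype.prod_boole]
      have : (Function.Injective f ∧ ∀ x i, f x i ∈ S i) ↔ (∀ i, ∀ x, f x i ∈ S i) := by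
        constructor
        · intro h i x; exact h.2 x i
        · intro h; exact ⟨hInj, fun x i => h i x⟩
      rw [if_congr this rfl rfl]
      split_ifs <;> rfl
    rw [Finset.sum_congr rfl fun S _ => hsplit S]
    rw [← Finset.prod_univ_sum (fun i => (Finset.univ : Finset (Fin (L i))).powerset)
      (fun i s => (-1 : ℤ) ^ (L i - s.card) * (if ∀ x, f x i ∈ s then 1 else 0))]
    rw [Finset.prod_congr rfl fun i _ => surj_indicator (fun x => f x i)]
    rw [Fintype.prod_boole]
    by_cases hs : ∀ i, Function.Surjective fun x => f x i
    · rw [if_pos hs, if_pos ⟨hInj, hs⟩]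
    · rw [if_neg hs, if_neg (fun h => hs h.2)]
  · have : ∀ S : ∀ i, Finset (Fin (L i)),
        (∏ i, (-1 : ℤ) ^ (L i - (S i).card))
          * (if Function.Injective f ∧ ∀ x i, f x i ∈ S i then (1 : ℤ) else 0) = 0 := by
      intro S
      rw [if_neg (fun h => hInj h.1), mul_zero]
    rw [Finset.sum_congr rfl fun S _ => this S, Finset.sum_const_zero,
      if_neg (fun h => hInj h.1)]

lemma exists_good (k : ℕ) {n : ℕ} (L : Fin n → ℕ)
    (h1 : ∀ i, 1 ≤ L i) (h2 : ∀ i, L i ≤ k) (h3 : k ≤ ∏ i, L i) :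
    ∃ f : Fin k → ∀ i, Fin (L i),
      Function.Injective f ∧ ∀ i, Function.Surjective (fun x => f x i) := by
  classical
  have hmin : ∀ (j : Fin k) (i : Fin n), min j.val (L i - 1) < L i := by
    intro j i
    have := h1 i
    omega
  set d : Fin k → ∀ i, Fin (L i) := fun j i => ⟨min j.val (L i - 1), hmin j i⟩ with hd
  set T : Finset (∀ i, Fin (L i)) := Finset.univ.image d with hT
  have hTcard : T.card ≤ k := le_trans Finset.card_image_le (by simp)
  have hcard_univ : k ≤ (Finset.univ : Finset (∀ i, Fin (L i))).card := by
    rw [Finset.card_univ, Fintype.card_pi]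
    simpa using h3
  obtain ⟨U, hTU, _, hUcard⟩ :=
    Finset.exists_subsuperset_card_eq (Finset.subset_univ T) hTcard hcard_univ
  have e : {x // x ∈ U} ≃ Fin k := hUcard ▸ U.equivFin
  refine ⟨fun x => (e.symm x : _), ?_, ?_⟩
  · intro a b hab
    apply e.symm.injective
    exact Subtype.ext hab
  · intro i y
    have hy : (y : ℕ) < k := lt_of_lt_of_le y.isLt (h2 i)
    set j : Fin k := ⟨y.val, hy⟩ with hj
    have hdj : d j i = y := by
      apply Fin.ext
      show min j.val (L i - 1) = y.val
      have := y.isLt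
      simp [hj]
      omega
    have hdU : d j ∈ U := hTU (Finset.mem_image_of_mem d (Finset.mem_univ j))
    refine ⟨e ⟨d j, hdU⟩, ?_⟩
    show ((e.symm (e ⟨d j, hdU⟩)) : ∀ i, Fin (L i)) i = y
    rw [Equiv.symm_apply_apply]
    exact hdj ▸ rfl

/-- Vanishing and positivity of the multivariable coefficients. -/
theorem cMulti_vanishing_and_positivity (k n : ℕ) (hk : 1 ≤ k) (hn : 1 ≤ n)
    (L : Fin n → ℕ) (hL : ∀ i, 1 ≤ L i ∧ L i ≤ k) :
    (∏ i, L i < k → cMulti k L = 0) ∧ (k ≤ ∏ i, L i → 0 < cMulti k L) := by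
  classical
  have hfac : (0 : ℤ) < ((∏ i, (L i).factorial : ℕ) : ℤ) := by
    rw [Nat.cast_pos]
    exact Finset.prod_pos fun i _ => (L i).factorial_pos
  have hp := pivot k hk L
  constructor
  · intro hlt
    have hz : ∑ S ∈ Fintype.piFinset (fun i => (Finset.univ : Finset (Fin (L i))).powerset),
        (∏ i, (-1 : ℤ) ^ (L i - (S i).card)) * (((∏ i, (S i).card).descFactorial k : ℕ) : ℤ)
        = 0 := by
      refine Finset.sum_eq_zero fun S hS => ?_
      have hcard : ∀ i, (S i).card ≤ L i := by
        intro i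
        have hSi : S i ⊆ Finset.univ := Finset.mem_powerset.mp
          (Fintype.mem_piFinset.mp hS i)
        have := Finset.card_le_card hSi
        simpa using this
      have hprod : ∏ i, (S i).card ≤ ∏ i, L i :=
        Finset.prod_le_prod' fun i _ => hcard i
      rw [Nat.descFactorial_eq_zero_iff_lt.mpr (lt_of_le_of_lt hprod hlt)]
      simp
    rw [hz] at hp
    rcases mul_eq_zero.mp hp with h | h
    · exact absurd h (ne_of_gt hfac)
    · exact h
  · intro hge
    rw [pivot_eq_card k L] at hp
    obtain ⟨f, hfinj, hfsurj⟩ := exists_good k L (fun i => (hL i).1) (fun i => (hL i).2) hge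
    have hpos : 0 < ((Finset.univ.filter (fun f : Fin k → ∀ i, Fin (L i) =>
        Function.Injective f ∧ ∀ i, Function.Surjective (fun x => f x i))).card : ℤ) := by
      rw [Nat.cast_pos, Finset.card_pos]
      exact ⟨f, Finset.mem_filter.mpr ⟨Finset.mem_univ f, hfinj, hfsurj⟩⟩
    rw [← hp] at hpos
    by_contra hc
    push_neg at hc
    have : ((∏ i, (L i).factorial : ℕ) : ℤ) * cMulti k L ≤ 0 :=
      mul_nonpos_of_nonneg_of_nonpos (le_of_lt hfac) hc
    linarith
end
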